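/- arXiv:0906.2579 — 3 statements merged into one kernel-verified Lean document; each statement's English description precedes it below -/
import Mathlib

section
/- Let x, y be generators of a grid diagram of size N and let D ∈ 𝒟(x,y) be a positive domain with μ(D) = 1. Then x and y differ in exactly two values: there are i₁ ≠ i₂ in ℤ/N with x(i) = y(i) for all i ∉ {i₁, i₂}. Moreover D takes only the values 0 and 1; the set of squares on which D = 1 is a product I × J of two proper cyclic intervals of ℤ/N; the four corner lattice points of this rectangle are exactly the four points (i₁, x(i₁)), (i₂, x(i₂)), (i₁, y(i₁)), (i₂, y(i₂)), with the lower-left and upper-right corners belonging to x \ y and the other two corners belonging to y \ x; and n_p(D) = 0 for every point p = (i, x(i)) with i ∉ {i₁, i₂}, i.e. the rectangle contains no other coordinate of x or of y in its interior. -/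
/-- A generator of a grid diagram of size `N`: a permutation of `ℤ/N`. -/
abbrev GridGen (N : ℕ) := Equiv.Perm (ZMod N)

/-- The alternating corner sum of a 2-chain `D` at the lattice point `(a, b)`. -/
def cornerSum (N : ℕ) (D : ZMod N → ZMod N → ℤ) (a b : ZMod N) : ℤ :=
  D a b - D (a - 1) b - D a (b - 1) + D (a - 1) (b - 1)

/-- `D` is a domain from the generator `x` to the generator `y`: the alternating
corner sum at a lattice point `p` is `1` if `p ∈ x \ y`, `-1` if `p ∈ y \ x`, and
`0` otherwise. -/
def IsGridDomain (N : ℕ) (x y : GridGen N) (D : ZMod N → ZMod N → ℤ) : Prop :=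
  ∀ a b : ZMod N, cornerSum N D a b =
    if x a = b ∧ y a ≠ b then 1 else if y a = b ∧ x a ≠ b then -1 else 0

/-- The point measure `n_p(D)` at the lattice point `p = (a, b)`: the average of
the values of `D` on the four squares around `p`. -/
def gridNp (N : ℕ) (D : ZMod N → ZMod N → ℤ) (a b : ZMod N) : ℚ :=
  ((D a b : ℚ) + (D (a - 1) b : ℚ) + (D a (b - 1) : ℚ) + (D (a - 1) (b - 1) : ℚ)) / 4

/-- The Maslov index `μ(D) = Σ_i (n_{(i, x i)}(D) + n_{(i, y i)}(D))`. -/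
def maslovIndex (N : ℕ) [NeZero N] (x y : GridGen N) (D : ZMod N → ZMod N → ℤ) : ℚ :=
  ∑ i : ZMod N, (gridNp N D i (x i) + gridNp N D i (y i))

/-!
At a point of `x \ y` or `y \ x` the corner sum of `D` is `±1`, so for a positive domain the four
squares around it carry total weight at least `1` and `n_p(D) ≥ 1/4`. Hence `μ(D) ≥ k / 2`, where
`k` is the number of columns in which the permutations `x` and `y` differ. Two permutations never
differ in exactly one column, and `k = 0` is impossible: then all corner sums vanish, `D(a, b)`
splits as `f a + g b`, and `μ(D) = 2 Σ D(i, x i)` is even. So `k = 2`, `y = x ∘ (i₁ i₂)`, and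
`μ(D) = 1` forces `n_p(D) = 1/4` at the corners and `n_p(D) = 0` at every other point of `x`.
The latter makes `D` constant across every other column and every other row, so `D` is determined
by its values around `(i₁, x i₁)`: it is the indicator of `I × J`, for the cyclic intervals
`I = [i₁, i₂)` and `J = [x i₁, x i₂)`, or of `Iᶜ × Jᶜ`, which is the same kind of rectangle with
`i₁` and `i₂` exchanged.
-/

namespace ZMod

def cyclicInterval {N : ℕ} (a : ZMod N) (m : ℕ) : Set (ZMod N) := {p | ∃ j < m, p = a + j}

variable {N : ℕ} [NeZero N]

theorem mem_cyclicInterval_iff {a p : ZMod N} {m : ℕ} (hm : m ≤ N) :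
    p ∈ cyclicInterval a m ↔ (p - a).val < m := by
  constructor
  · rintro ⟨j, hj, rfl⟩
    rwa [add_sub_cancel_left, val_natCast_of_lt (hj.trans_le hm)]
  · exact fun h => ⟨(p - a).val, h, by rw [natCast_zmod_val, add_sub_cancel]⟩

theorem notMem_cyclicInterval_iff {a b p : ZMod N} (hab : a ≠ b) :
    p ∉ cyclicInterval a (b - a).val ↔ p ∈ cyclicInterval b (a - b).val := by
  rw [mem_cyclicInterval_iff (val_lt _).le, mem_cyclicInterval_iff (val_lt _).le, not_lt]
  have : NeZero (b - a) := ⟨sub_ne_zero.2 hab.symm⟩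
  have hneg : (a - b).val = N - (b - a).val := by rw [← neg_sub, val_neg_of_ne_zero]
  have hlt := (p - a).val_lt
  have hba := (b - a).val_lt
  by_cases h : (b - a).val ≤ (p - a).val
  · rw [show p - b = (p - a) - (b - a) by ring, val_sub h]
    omega
  · have hsum : (p - a).val + (a - b).val < N := by omega
    rw [show p - b = (p - a) + (a - b) by ring, val_add_of_lt hsum]
    omega

theorem apply_eq_of_forall_apply_eq_apply_sub_one {G : Type*} {h : ZMod N → G}
    (hh : ∀ b, h b = h (b - 1)) (b c : ZMod N) : h b = h c := by
  have hper : Function.Periodic h 1 := fun b => by simpa using hh (b + 1)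
  simpa using (hper.nat_mul (c - b).val b).symm

theorem sum_sub_apply_sub_one_eq_zero {G : Type*} [AddCommGroup G] (h : ZMod N → G) :
    ∑ b, (h b - h (b - 1)) = 0 := by
  rw [Finset.sum_sub_distrib, sub_eq_zero]
  exact (Equiv.sum_comp (Equiv.subRight 1) h).symm

open scoped Classical in
theorem apply_eq_add_ite_of_forall_apply_eq_apply_sub_one {G : Type*} [AddCommGroup G]
    {h : ZMod N → G} {p q : ZMod N} (hpq : p ≠ q)
    (hh : ∀ b, b ≠ p → b ≠ q → h b = h (b - 1)) (b : ZMod N) :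
    h b = h (p - 1) + if b ∈ cyclicInterval p (q - p).val then h p - h (p - 1) else 0 := by
  set m := (q - p).val
  have hm : 0 < m := val_pos.2 (sub_ne_zero.2 hpq.symm)
  have hjump : h q - h (q - 1) = -(h p - h (p - 1)) := by
    have := sum_sub_apply_sub_one_eq_zero h
    rw [Fintype.sum_eq_add p q hpq fun b hb => sub_eq_zero.2 (hh b hb.1 hb.2)] at this
    exact eq_neg_of_add_eq_zero_right this
  have key : ∀ t : ℕ, t < N →
      h (p + t) = h (p - 1) + if t < m then h p - h (p - 1) else 0 := by
    intro t
    induction t with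
    | zero => intro _; simp [hm]
    | succ t ih =>
      intro ht
      have hne : p + ((t + 1 : ℕ) : ZMod N) ≠ p := by
        rw [Ne, add_eq_left, ← val_eq_zero, val_natCast_of_lt ht]; omega
      have hq : p + ((t + 1 : ℕ) : ZMod N) = q ↔ t + 1 = m := by
        rw [← eq_sub_iff_add_eq', ← (val_injective N).eq_iff, val_natCast_of_lt ht]
      have hpred : p + ((t + 1 : ℕ) : ZMod N) - 1 = p + t := by push_cast; ring
      by_cases htm : t + 1 = m
      · rw [hq.2 htm, eq_add_of_sub_eq' hjump, ← hq.2 htm, hpred, ih (by omega)]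
        simp [htm.symm]
      · rw [hh _ hne (mt hq.1 htm), hpred, ih (by omega)]
        congr 1
        exact if_congr (by omega) rfl rfl
  have hb := key (b - p).val (val_lt _)
  rw [natCast_zmod_val, add_sub_cancel] at hb
  convert hb using 3
  exact mem_cyclicInterval_iff (val_lt _).le

end ZMod

def IsEmptyRectangle (N : ℕ) (x y : GridGen N) (D : ZMod N → ZMod N → ℤ) : Prop :=
  ∃ (a b : ZMod N) (m m' : ℕ),
    1 ≤ m ∧ m ≤ N - 1 ∧ 1 ≤ m' ∧ m' ≤ N - 1 ∧
    (∀ p q : ZMod N, (D p q = 0 ∨ D p q = 1) ∧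
      (D p q = 1 ↔ p ∈ ZMod.cyclicInterval a m ∧ q ∈ ZMod.cyclicInterval b m')) ∧
    x a = b ∧ y a ≠ b ∧
    x (a + (m : ZMod N)) = b + (m' : ZMod N) ∧ y (a + (m : ZMod N)) ≠ b + (m' : ZMod N) ∧
    y a = b + (m' : ZMod N) ∧ x a ≠ b + (m' : ZMod N) ∧
    y (a + (m : ZMod N)) = b ∧ x (a + (m : ZMod N)) ≠ b ∧
    a ≠ a + (m : ZMod N) ∧
    ∀ i : ZMod N, i ≠ a → i ≠ a + (m : ZMod N) → x i = y i ∧ gridNp N D i (x i) = 0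

section CornerSum

variable {N : ℕ} {D : ZMod N → ZMod N → ℤ}

theorem cornerSum_eq_zero_of_iff {x y : GridGen N} (hD : IsGridDomain N x y D) {a b : ZMod N}
    (h : x a = b ↔ y a = b) : cornerSum N D a b = 0 := by
  simp [hD a b, h]

theorem sub_eq_sub_of_forall_cornerSum_eq_zero_left [NeZero N] {a : ZMod N}
    (hc : ∀ b, cornerSum N D a b = 0) (b c : ZMod N) :
    D a b - D (a - 1) b = D a c - D (a - 1) c :=
  ZMod.apply_eq_of_forall_apply_eq_apply_sub_one (h := fun b => D a b - D (a - 1) b)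
    (fun b => by have := hc b; unfold cornerSum at this; linarith) b c

theorem sub_eq_sub_of_forall_cornerSum_eq_zero_right [NeZero N] {b : ZMod N}
    (hc : ∀ a, cornerSum N D a b = 0) (a c : ZMod N) :
    D a b - D a (b - 1) = D c b - D c (b - 1) :=
  ZMod.apply_eq_of_forall_apply_eq_apply_sub_one (h := fun a => D a b - D a (b - 1))
    (fun a => by have := hc a; unfold cornerSum at this; linarith) a c

theorem exists_eq_add_of_forall_cornerSum_eq_zero [NeZero N]
    (hc : ∀ a b, cornerSum N D a b = 0) : ∃ f g : ZMod N → ℤ, ∀ a b, D a b = f a + g b := by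
  refine ⟨fun a => D a 0, fun b => D 0 b - D 0 0, fun a b => ?_⟩
  have := ZMod.apply_eq_of_forall_apply_eq_apply_sub_one (h := fun a => D a b - D a 0)
    (fun a => by linarith [sub_eq_sub_of_forall_cornerSum_eq_zero_left (hc a) b 0]) a 0
  dsimp only at this ⊢
  linarith

theorem maslovIndex_self [NeZero N] {x : GridGen N} (hD : IsGridDomain N x x D) :
    maslovIndex N x x D = 2 * ∑ i, (D i (x i) : ℚ) := by
  obtain ⟨f, g, hfg⟩ :=
    exists_eq_add_of_forall_cornerSum_eq_zero fun _ _ => cornerSum_eq_zero_of_iff hD Iff.rfl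
  have hf : ∑ i, (f (i - 1) : ℚ) = ∑ i, (f i : ℚ) :=
    Equiv.sum_comp (Equiv.subRight 1) fun i => (f i : ℚ)
  have hg : ∑ i, (g (x i - 1) : ℚ) = ∑ i, (g (x i) : ℚ) := by
    rw [Equiv.sum_comp x fun b => (g (b - 1) : ℚ), Equiv.sum_comp x fun b => (g b : ℚ)]
    exact Equiv.sum_comp (Equiv.subRight 1) fun b => (g b : ℚ)
  simp only [maslovIndex, gridNp, hfg, Int.cast_add]
  calc _ = ∑ i, ((f i : ℚ) + g (x i)) + (∑ i, (f (i - 1) : ℚ) + ∑ i, (g (x i - 1) : ℚ)) := by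
        simp only [← Finset.sum_add_distrib]
        exact Finset.sum_congr rfl fun i _ => by ring
    _ = _ := by rw [hf, hg, ← Finset.sum_add_distrib]; ring

theorem gridNp_eq (a b : ZMod N) : gridNp N D a b =
    ((D a b + D (a - 1) b + D a (b - 1) + D (a - 1) (b - 1) : ℤ) : ℚ) / 4 := by
  push_cast
  rfl

theorem gridNp_nonneg (hpos : ∀ p q, 0 ≤ D p q) (a b : ZMod N) : 0 ≤ gridNp N D a b := by
  rw [gridNp_eq]
  have := hpos a b; have := hpos (a - 1) b; have := hpos a (b - 1); have := hpos (a - 1) (b - 1)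
  positivity

theorem quarter_le_gridNp (hpos : ∀ p q, 0 ≤ D p q) {a b : ZMod N} (h : cornerSum N D a b ≠ 0) :
    1 / 4 ≤ gridNp N D a b := by
  unfold cornerSum at h
  have := hpos a b; have := hpos (a - 1) b; have := hpos a (b - 1); have := hpos (a - 1) (b - 1)
  rw [gridNp_eq, div_le_div_iff_of_pos_right four_pos]
  exact_mod_cast (show (1 : ℤ) ≤ _ by omega)

theorem eq_zero_of_gridNp_eq_zero (hpos : ∀ p q, 0 ≤ D p q) {a b : ZMod N}
    (h : gridNp N D a b = 0) :
    D a b = 0 ∧ D (a - 1) b = 0 ∧ D a (b - 1) = 0 ∧ D (a - 1) (b - 1) = 0 := by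
  rw [gridNp_eq, div_eq_zero_iff, Int.cast_eq_zero, or_iff_left four_ne_zero] at h
  have := hpos a b; have := hpos (a - 1) b; have := hpos a (b - 1); have := hpos (a - 1) (b - 1)
  omega

end CornerSum

theorem Equiv.Perm.mem_support_inv_mul_iff {α : Type*} [DecidableEq α] [Fintype α]
    {x y : Equiv.Perm α} {i : α} : i ∈ (x⁻¹ * y).support ↔ x i ≠ y i := by
  rw [mem_support, mul_apply, Ne, inv_eq_iff_eq, eq_comm]

open Finset

section Maslov

variable {N : ℕ} {x y : GridGen N} {D : ZMod N → ZMod N → ℤ}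

theorem quarter_le_gridNp_of_ne (hD : IsGridDomain N x y D) (hpos : ∀ p q, 0 ≤ D p q)
    {i : ZMod N} (h : x i ≠ y i) :
    1 / 4 ≤ gridNp N D i (x i) ∧ 1 / 4 ≤ gridNp N D i (y i) :=
  ⟨quarter_le_gridNp hpos (by simp [hD i (x i), h.symm]),
    quarter_le_gridNp hpos (by simp [hD i (y i), h])⟩

variable [NeZero N]

theorem ite_le_gridNp_add_gridNp (hD : IsGridDomain N x y D) (hpos : ∀ p q, 0 ≤ D p q)
    (i : ZMod N) : (if i ∈ (x⁻¹ * y).support then 1 / 2 else 0 : ℚ) ≤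
      gridNp N D i (x i) + gridNp N D i (y i) := by
  split_ifs with h
  · have := quarter_le_gridNp_of_ne hD hpos (Equiv.Perm.mem_support_inv_mul_iff.1 h)
    linarith [this.1, this.2]
  · exact add_nonneg (gridNp_nonneg hpos _ _) (gridNp_nonneg hpos _ _)

theorem sum_ite_mem_support_eq :
    ∑ i, (if i ∈ (x⁻¹ * y).support then 1 / 2 else 0 : ℚ) = #(x⁻¹ * y).support / 2 := by
  rw [sum_ite_mem, univ_inter, sum_const, nsmul_eq_mul]
  ring

theorem card_support_div_two_le_maslovIndex (hD : IsGridDomain N x y D)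
    (hpos : ∀ p q, 0 ≤ D p q) : (#(x⁻¹ * y).support : ℚ) / 2 ≤ maslovIndex N x y D := by
  rw [← sum_ite_mem_support_eq]
  exact sum_le_sum fun i _ => ite_le_gridNp_add_gridNp hD hpos i

theorem gridNp_add_gridNp_eq_ite (hD : IsGridDomain N x y D) (hpos : ∀ p q, 0 ≤ D p q)
    (hmu : maslovIndex N x y D = #(x⁻¹ * y).support / 2) (i : ZMod N) :
    gridNp N D i (x i) + gridNp N D i (y i) = if i ∈ (x⁻¹ * y).support then 1 / 2 else 0 := by
  have hsum := sum_ite_mem_support_eq (x := x) (y := y)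
  rw [← hmu] at hsum
  exact ((sum_eq_sum_iff_of_le fun i _ => ite_le_gridNp_add_gridNp hD hpos i).1 hsum i
    (mem_univ i)).symm

end Maslov

section Swap

open Equiv

variable {N : ℕ} {x : GridGen N} {D : ZMod N → ZMod N → ℤ} {a₁ a₂ : ZMod N}

theorem cornerSum_eq_zero_of_swap_left (hD : IsGridDomain N x (x * swap a₁ a₂) D)
    {a : ZMod N} (h₁ : a ≠ a₁) (h₂ : a ≠ a₂) (b : ZMod N) : cornerSum N D a b = 0 :=
  cornerSum_eq_zero_of_iff hD (by rw [Perm.mul_apply, swap_apply_of_ne_of_ne h₁ h₂])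

theorem cornerSum_eq_zero_of_swap_right (hD : IsGridDomain N x (x * swap a₁ a₂) D)
    {b : ZMod N} (h₁ : b ≠ x a₁) (h₂ : b ≠ x a₂) (a : ZMod N) : cornerSum N D a b = 0 := by
  refine cornerSum_eq_zero_of_iff hD ?_
  rw [Perm.mul_apply]
  by_cases ha₁ : a = a₁
  · simp [ha₁, h₁.symm, h₂.symm]
  by_cases ha₂ : a = a₂
  · simp [ha₂, h₁.symm, h₂.symm]
  rw [swap_apply_of_ne_of_ne ha₁ ha₂]

theorem cornerSum_eq_one_of_swap (hD : IsGridDomain N x (x * swap a₁ a₂) D) (ha : a₁ ≠ a₂) :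
    cornerSum N D a₁ (x a₁) = 1 := by
  simp [hD a₁ (x a₁), x.injective.ne ha.symm]

theorem corner_values_of_swap (hD : IsGridDomain N x (x * swap a₁ a₂) D)
    (hpos : ∀ p q, 0 ≤ D p q) (ha : a₁ ≠ a₂) (hcorner : gridNp N D a₁ (x a₁) = 1 / 4) :
    D (a₁ - 1) (x a₁) = 0 ∧ D a₁ (x a₁ - 1) = 0 ∧ D (a₁ - 1) (x a₁ - 1) ≤ 1 := by
  have hjump := cornerSum_eq_one_of_swap hD ha
  unfold cornerSum at hjump
  rw [gridNp_eq, div_left_inj' four_ne_zero, Int.cast_eq_one] at hcorner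
  have := hpos a₁ (x a₁); have := hpos (a₁ - 1) (x a₁); have := hpos a₁ (x a₁ - 1)
  have := hpos (a₁ - 1) (x a₁ - 1)
  omega

variable [NeZero N]

open scoped Classical in
theorem apply_eq_add_ite_of_swap (hD : IsGridDomain N x (x * swap a₁ a₂) D)
    (hpos : ∀ p q, 0 ≤ D p q) (ha : a₁ ≠ a₂)
    (hoff : ∀ i, i ≠ a₁ → i ≠ a₂ → gridNp N D i (x i) = 0) (p q : ZMod N) :
    D p q = D (a₁ - 1) q +
      if p ∈ ZMod.cyclicInterval a₁ (a₂ - a₁).val then D a₁ q - D (a₁ - 1) q else 0 := by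
  have hcol : ∀ a, a ≠ a₁ → a ≠ a₂ → D a = D (a - 1) := fun a h₁ h₂ => funext fun b => by
    have := sub_eq_sub_of_forall_cornerSum_eq_zero_left
      (cornerSum_eq_zero_of_swap_left hD h₁ h₂) b (x a)
    linarith [eq_zero_of_gridNp_eq_zero hpos (hoff a h₁ h₂)]
  rw [congrFun (ZMod.apply_eq_add_ite_of_forall_apply_eq_apply_sub_one ha hcol p) q]
  split_ifs <;> rfl

open scoped Classical in
theorem sub_eq_add_ite_of_swap (hD : IsGridDomain N x (x * swap a₁ a₂) D) (ha : a₁ ≠ a₂)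
    (q : ZMod N) :
    D a₁ q - D (a₁ - 1) q = D a₁ (x a₁ - 1) - D (a₁ - 1) (x a₁ - 1) +
      if q ∈ ZMod.cyclicInterval (x a₁) (x a₂ - x a₁).val then 1 else 0 := by
  have hjump := cornerSum_eq_one_of_swap hD ha
  unfold cornerSum at hjump
  rw [ZMod.apply_eq_add_ite_of_forall_apply_eq_apply_sub_one (h := fun b => D a₁ b - D (a₁ - 1) b)
    (x.injective.ne ha) (fun b h₁ h₂ => ?_) q]
  · split_ifs <;> linarith
  · have := cornerSum_eq_zero_of_swap_right hD h₁ h₂ a₁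
    unfold cornerSum at this
    linarith

open scoped Classical in
theorem apply_sub_one_eq_add_ite_of_swap (hD : IsGridDomain N x (x * swap a₁ a₂) D)
    (hpos : ∀ p q, 0 ≤ D p q) (ha : a₁ ≠ a₂)
    (hoff : ∀ i, i ≠ a₁ → i ≠ a₂ → gridNp N D i (x i) = 0) (q : ZMod N) :
    D (a₁ - 1) q = D (a₁ - 1) (x a₁ - 1) +
      if q ∈ ZMod.cyclicInterval (x a₁) (x a₂ - x a₁).val then
        D (a₁ - 1) (x a₁) - D (a₁ - 1) (x a₁ - 1) else 0 := by
  refine ZMod.apply_eq_add_ite_of_forall_apply_eq_apply_sub_one (h := fun b => D (a₁ - 1) b)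
    (x.injective.ne ha) (fun b h₁ h₂ => ?_) q
  have hi₁ : x.symm b ≠ a₁ := fun h => h₁ (by rw [← h, Equiv.apply_symm_apply])
  have hi₂ : x.symm b ≠ a₂ := fun h => h₂ (by rw [← h, Equiv.apply_symm_apply])
  have := sub_eq_sub_of_forall_cornerSum_eq_zero_right
    (cornerSum_eq_zero_of_swap_right hD h₁ h₂) (a₁ - 1) (x.symm b)
  have hz := eq_zero_of_gridNp_eq_zero hpos (hoff _ hi₁ hi₂)
  rw [Equiv.apply_symm_apply] at hz
  linarith [hz.1, hz.2.2.1]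

open scoped Classical in
theorem eq_rectangle_or_compl_of_swap (hD : IsGridDomain N x (x * swap a₁ a₂) D)
    (hpos : ∀ p q, 0 ≤ D p q) (ha : a₁ ≠ a₂)
    (hoff : ∀ i, i ≠ a₁ → i ≠ a₂ → gridNp N D i (x i) = 0)
    (hcorner : gridNp N D a₁ (x a₁) = 1 / 4) :
    (∀ p q, D p q = if p ∈ ZMod.cyclicInterval a₁ (a₂ - a₁).val ∧
      q ∈ ZMod.cyclicInterval (x a₁) (x a₂ - x a₁).val then 1 else 0) ∨
    (∀ p q, D p q = if p ∉ ZMod.cyclicInterval a₁ (a₂ - a₁).val ∧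
      q ∉ ZMod.cyclicInterval (x a₁) (x a₂ - x a₁).val then 1 else 0) := by
  obtain ⟨h₁, h₂, hc_le⟩ := corner_values_of_swap hD hpos ha hcorner
  have hformula : ∀ p q, D p q = D (a₁ - 1) (x a₁ - 1) +
      (if q ∈ ZMod.cyclicInterval (x a₁) (x a₂ - x a₁).val then -D (a₁ - 1) (x a₁ - 1) else 0) +
      if p ∈ ZMod.cyclicInterval a₁ (a₂ - a₁).val then -D (a₁ - 1) (x a₁ - 1) +
        (if q ∈ ZMod.cyclicInterval (x a₁) (x a₂ - x a₁).val then 1 else 0) else 0 := by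
    intro p q
    rw [apply_eq_add_ite_of_swap hD hpos ha hoff, sub_eq_add_ite_of_swap hD ha,
      apply_sub_one_eq_add_ite_of_swap hD hpos ha hoff, h₁, h₂]
    simp only [zero_sub]
  have hc' : D (a₁ - 1) (x a₁ - 1) = 0 ∨ D (a₁ - 1) (x a₁ - 1) = 1 := by
    have := hpos (a₁ - 1) (x a₁ - 1); omega
  refine hc'.imp (fun hc p q => ?_) (fun hc p q => ?_) <;>
    by_cases hp : p ∈ ZMod.cyclicInterval a₁ (a₂ - a₁).val <;>
    by_cases hq : q ∈ ZMod.cyclicInterval (x a₁) (x a₂ - x a₁).val <;>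
    simp [hformula p q, hp, hq, hc]

open scoped Classical in
theorem isEmptyRectangle_of_eq_ite (ha : a₁ ≠ a₂)
    (hoff : ∀ i, i ≠ a₁ → i ≠ a₂ → gridNp N D i (x i) = 0)
    (hrect : ∀ p q, D p q = if p ∈ ZMod.cyclicInterval a₁ (a₂ - a₁).val ∧
      q ∈ ZMod.cyclicInterval (x a₁) (x a₂ - x a₁).val then 1 else 0) :
    IsEmptyRectangle N x (x * swap a₁ a₂) D := by
  have hb : x a₁ ≠ x a₂ := x.injective.ne ha
  have hA : a₁ + ((a₂ - a₁).val : ZMod N) = a₂ := by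
    rw [ZMod.natCast_zmod_val, add_sub_cancel]
  have hB : x a₁ + ((x a₂ - x a₁).val : ZMod N) = x a₂ := by
    rw [ZMod.natCast_zmod_val, add_sub_cancel]
  have := (a₂ - a₁).val_lt
  have := (x a₂ - x a₁).val_lt
  refine ⟨a₁, x a₁, _, _, ZMod.val_pos.2 (sub_ne_zero.2 ha.symm), by omega,
    ZMod.val_pos.2 (sub_ne_zero.2 hb.symm), by omega, fun p q => ?_, ?_⟩
  · rw [hrect p q]
    split_ifs <;> simp [*]
  · rw [hA, hB, Perm.mul_apply, Perm.mul_apply, swap_apply_left, swap_apply_right]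
    exact ⟨rfl, hb.symm, rfl, hb, rfl, hb, rfl, hb.symm, ha, fun i h₁ h₂ =>
      ⟨by rw [Perm.mul_apply, swap_apply_of_ne_of_ne h₁ h₂], hoff i h₁ h₂⟩⟩

theorem isEmptyRectangle_of_maslovIndex_eq_one (hD : IsGridDomain N x (x * swap a₁ a₂) D)
    (hpos : ∀ p q, 0 ≤ D p q) (ha : a₁ ≠ a₂) (hmu : maslovIndex N x (x * swap a₁ a₂) D = 1) :
    IsEmptyRectangle N x (x * swap a₁ a₂) D := by
  have hsupp : (x⁻¹ * (x * swap a₁ a₂)).support = {a₁, a₂} := by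
    rw [inv_mul_cancel_left, Perm.support_swap ha]
  have hterm := gridNp_add_gridNp_eq_ite hD hpos (by rw [hmu, hsupp, card_pair ha]; norm_num)
  simp only [hsupp, mem_insert, mem_singleton] at hterm
  have hoff : ∀ i, i ≠ a₁ → i ≠ a₂ → gridNp N D i (x i) = 0 := fun i h₁ h₂ => by
    have := hterm i
    rw [if_neg (by tauto)] at this
    linarith [gridNp_nonneg hpos i (x i), gridNp_nonneg hpos i ((x * swap a₁ a₂) i)]
  have hcorner : gridNp N D a₁ (x a₁) = 1 / 4 := by
    have := hterm a₁
    rw [if_pos (Or.inl rfl)] at this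
    have := quarter_le_gridNp_of_ne hD hpos (i := a₁) (by simp [x.injective.ne ha])
    linarith [this.1, this.2]
  rcases eq_rectangle_or_compl_of_swap hD hpos ha hoff hcorner with hrect | hrect
  · exact isEmptyRectangle_of_eq_ite ha hoff hrect
  · rw [swap_comm]
    refine isEmptyRectangle_of_eq_ite ha.symm (fun i h₂ h₁ => hoff i h₁ h₂) fun p q => ?_
    convert hrect p q using 3
    · rw [ZMod.notMem_cyclicInterval_iff ha]
    · rw [ZMod.notMem_cyclicInterval_iff (x.injective.ne ha)]

end Swap

theorem positive_index_one_domain_is_empty_rectangle_general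
    (N : ℕ) [NeZero N]
    (x y : GridGen N) (D : ZMod N → ZMod N → ℤ)
    (hD : IsGridDomain N x y D) (hpos : ∀ p q : ZMod N, 0 ≤ D p q)
    (hmu : maslovIndex N x y D = 1) :
    ∃ (a b : ZMod N) (m m' : ℕ),
      1 ≤ m ∧ m ≤ N - 1 ∧ 1 ≤ m' ∧ m' ≤ N - 1 ∧
      (∀ p q : ZMod N,
        (D p q = 0 ∨ D p q = 1) ∧
        (D p q = 1 ↔
          (∃ j : ℕ, j < m ∧ p = a + (j : ZMod N)) ∧
            (∃ j : ℕ, j < m' ∧ q = b + (j : ZMod N)))) ∧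
      x a = b ∧ y a ≠ b ∧
      x (a + (m : ZMod N)) = b + (m' : ZMod N) ∧
      y (a + (m : ZMod N)) ≠ b + (m' : ZMod N) ∧
      y a = b + (m' : ZMod N) ∧ x a ≠ b + (m' : ZMod N) ∧
      y (a + (m : ZMod N)) = b ∧ x (a + (m : ZMod N)) ≠ b ∧
      a ≠ a + (m : ZMod N) ∧
      ∀ i : ZMod N, i ≠ a → i ≠ a + (m : ZMod N) →
        x i = y i ∧ gridNp N D i (x i) = 0 := by
  have hxy : x ≠ y := by
    rintro rfl
    have h := (maslovIndex_self hD).symm.trans hmu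
    have : (2 * ∑ i, D i (x i) : ℤ) = 1 := by exact_mod_cast h
    omega
  have hcard : #(x⁻¹ * y).support = 2 := by
    have hle := card_support_div_two_le_maslovIndex hD hpos
    rw [hmu, div_le_one two_pos] at hle
    have h0 : #(x⁻¹ * y).support ≠ 0 := by
      rwa [Ne, card_eq_zero, Equiv.Perm.support_eq_empty_iff, inv_mul_eq_one]
    have h1 := Equiv.Perm.card_support_ne_one (x⁻¹ * y)
    have : #(x⁻¹ * y).support ≤ 2 := by exact_mod_cast hle
    omega
  obtain ⟨a₁, a₂, ha, hswap⟩ := Equiv.Perm.card_support_eq_two.1 hcard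
  rw [inv_mul_eq_iff_eq_mul] at hswap
  subst hswap
  exact isEmptyRectangle_of_maslovIndex_eq_one hD hpos ha hmu

/-- A positive domain `D ∈ 𝒟(x,y)` of Maslov index `1` is an
empty rectangle: `x` and `y` differ in exactly two values `i₁ = a` and
`i₂ = a + m`; `D` takes only the values `0` and `1`, and `D = 1` exactly on a
product `I × J` of two proper cyclic intervals; the four corners of this
rectangle are exactly the four points `(i₁, x i₁), (i₂, x i₂), (i₁, y i₁),
(i₂, y i₂)`, with the lower-left and upper-right corners in `x \ y` and the
other two corners in `y \ x`; and `n_p(D) = 0` for every other coordinate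
`p = (i, x i)`. -/
theorem positive_index_one_domain_is_empty_rectangle
    (N : ℕ) [NeZero N] (hN : 2 ≤ N)
    (σO σX : GridGen N) (hσ : ∀ i : ZMod N, σO i ≠ σX i)
    (x y : GridGen N) (D : ZMod N → ZMod N → ℤ)
    (hD : IsGridDomain N x y D) (hpos : ∀ p q : ZMod N, 0 ≤ D p q)
    (hmu : maslovIndex N x y D = 1) :
    ∃ (a b : ZMod N) (m m' : ℕ),
      1 ≤ m ∧ m ≤ N - 1 ∧ 1 ≤ m' ∧ m' ≤ N - 1 ∧
      (∀ p q : ZMod N,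
        (D p q = 0 ∨ D p q = 1) ∧
        (D p q = 1 ↔
          (∃ j : ℕ, j < m ∧ p = a + (j : ZMod N)) ∧
            (∃ j : ℕ, j < m' ∧ q = b + (j : ZMod N)))) ∧
      x a = b ∧ y a ≠ b ∧
      x (a + (m : ZMod N)) = b + (m' : ZMod N) ∧
      y (a + (m : ZMod N)) ≠ b + (m' : ZMod N) ∧
      y a = b + (m' : ZMod N) ∧ x a ≠ b + (m' : ZMod N) ∧
      y (a + (m : ZMod N)) = b ∧ x (a + (m : ZMod N)) ≠ b ∧
      a ≠ a + (m : ZMod N) ∧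
      ∀ i : ZMod N, i ≠ a → i ≠ a + (m : ZMod N) →
        x i = y i ∧ gridNp N D i (x i) = 0 :=
  positive_index_one_domain_is_empty_rectangle_general N x y D hD hpos hmu
end

section
/- Suppose a grid diagram of size N represents a knot. Then the relation ⪯ on pairs (x,k), where x is a generator and k : ℤ/N → ℕ, is a partial order: it is reflexive, transitive, and antisymmetric. Moreover comparable elements have equal Alexander grading: if (y,l) ⪯ (x,k) then A(x) − Σ_i k(i) = A(y) − Σ_i l(i). -/
/-- `J(a, b) = 1/2` if `(a₁ - b₁)(a₂ - b₂) > 0` and `0` otherwise. -/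
noncomputable def Jpt (p q : ℝ × ℝ) : ℚ :=
  if 0 < (p.1 - q.1) * (p.2 - q.2) then 1 / 2 else 0

/-- The planar point corresponding to a coordinate `(i, b)` of a generator,
representing `ℤ/N` by `{0, 1, …, N-1} ⊂ ℝ`. -/
noncomputable def genPt (N : ℕ) (i b : ZMod N) : ℝ × ℝ :=
  ((ZMod.val i : ℝ), (ZMod.val b : ℝ))

/-- The planar point of the marking in column `i` determined by the permutation
`σ`: the centre `(i + 1/2, σ i + 1/2)` of the square `(i, σ i)`. -/
noncomputable def markPt (N : ℕ) (σ : GridGen N) (i : ZMod N) : ℝ × ℝ :=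
  ((ZMod.val i : ℝ) + 1 / 2, (ZMod.val (σ i) : ℝ) + 1 / 2)

/-- The absolute Maslov grading `M(x) = J(x - 𝕆, x - 𝕆) + 1`, with `J` extended
bilinearly to formal sums of points. -/
noncomputable def MaslovGrading (N : ℕ) [NeZero N] (σO : GridGen N) (x : GridGen N) : ℚ :=
  (∑ i : ZMod N, ∑ j : ZMod N,
      (Jpt (genPt N i (x i)) (genPt N j (x j)) - Jpt (genPt N i (x i)) (markPt N σO j) -
        Jpt (markPt N σO i) (genPt N j (x j)) + Jpt (markPt N σO i) (markPt N σO j))) + 1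

/-- The absolute Alexander grading
`A(x) = J(x - (𝕏 + 𝕆)/2, 𝕏 - 𝕆) - (N - 1)/2`, with `J` extended bilinearly to
formal sums of points. -/
noncomputable def AlexGrading (N : ℕ) [NeZero N] (σO σX : GridGen N) (x : GridGen N) : ℚ :=
  (∑ i : ZMod N, ∑ j : ZMod N,
      (Jpt (genPt N i (x i)) (markPt N σX j) - Jpt (genPt N i (x i)) (markPt N σO j) -
        (1 / 2) * Jpt (markPt N σX i) (markPt N σX j) +
        (1 / 2) * Jpt (markPt N σX i) (markPt N σO j) -
        (1 / 2) * Jpt (markPt N σO i) (markPt N σX j) +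
        (1 / 2) * Jpt (markPt N σO i) (markPt N σO j))) - ((N : ℚ) - 1) / 2
/-- The grid diagram `(σO, σX)` represents a knot: `σX⁻¹ ∘ σO` is an `N`-cycle. -/
def GridIsKnot (N : ℕ) [NeZero N] (σO σX : GridGen N) : Prop :=
  (σX⁻¹ * σO).IsCycle ∧ (σX⁻¹ * σO).support = Finset.univ
/-- The relation `⪯` of the minus grid poset: `(y, l) ⪯ (x, k)` iff there is a
positive domain `D ∈ 𝒟(x, y)` with `n_{X_i}(D) = 0` and
`n_{O_i}(D) = l i - k i` for all `i`. -/
def MinusLE (N : ℕ) (σO σX : GridGen N) (yl xk : GridGen N × (ZMod N → ℕ)) : Prop :=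
  ∃ D : ZMod N → ZMod N → ℤ, IsGridDomain N xk.1 yl.1 D ∧
    (∀ p q : ZMod N, 0 ≤ D p q) ∧
    (∀ i : ZMod N, D i (σX i) = 0) ∧
    (∀ i : ZMod N, D i (σO i) = (yl.2 i : ℤ) - (xk.2 i : ℤ))

private lemma signIff (u s v t : ℕ) :
    (0 < ((u:ℝ) - ((s:ℝ)+1/2)) * ((v:ℝ) - ((t:ℝ)+1/2))) ↔ (s < u ↔ t < v) := by
  rcases Nat.lt_or_ge s u with h1 | h1 <;> rcases Nat.lt_or_ge t v with h2 | h2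
  · have a1 : (s:ℝ) + 1 ≤ u := by exact_mod_cast h1
    have a2 : (t:ℝ) + 1 ≤ v := by exact_mod_cast h2
    exact iff_of_true (mul_pos (by linarith) (by linarith)) (iff_of_true h1 h2)
  · have a1 : (s:ℝ) + 1 ≤ u := by exact_mod_cast h1
    have a2 : (v:ℝ) ≤ t := by exact_mod_cast h2
    exact iff_of_false (not_lt.mpr (by nlinarith)) (by omega)
  · have a1 : (u:ℝ) ≤ s := by exact_mod_cast h1
    have a2 : (t:ℝ) + 1 ≤ v := by exact_mod_cast h2
    exact iff_of_false (not_lt.mpr (by nlinarith)) (by omega)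
  · have a1 : (u:ℝ) ≤ s := by exact_mod_cast h1
    have a2 : (v:ℝ) ≤ t := by exact_mod_cast h2
    exact iff_of_true (mul_pos_of_neg_of_neg (by linarith) (by linarith)) (by omega)

private lemma jpt_eval (N : ℕ) [NeZero N] (σ : GridGen N) (a b j : ZMod N) :
    Jpt (genPt N a b) (markPt N σ j) =
      if (j.val < a.val ↔ (σ j).val < b.val) then 1/2 else 0 := by
  have h := signIff a.val j.val b.val (σ j).val
  unfold Jpt genPt markPt
  exact if_congr h rfl rfl

private lemma val_add_one_top (N : ℕ) [NeZero N] (a : ZMod N) (h : a.val = N - 1) :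
    (a + 1).val = 0 := by
  have hN : 1 ≤ N := Nat.one_le_iff_ne_zero.mpr (NeZero.ne N)
  have key : ((a.val + 1 : ℕ) : ZMod N) = a + 1 := by
    rw [Nat.cast_add, Nat.cast_one, ZMod.natCast_zmod_val]
  rw [← key, show a.val + 1 = N from by omega, ZMod.natCast_self, ZMod.val_zero]

private lemma val_add_one_lt (N : ℕ) [NeZero N] (a : ZMod N) (h : a.val ≠ N - 1) :
    (a + 1).val = a.val + 1 := by
  have h2 : a.val < N := ZMod.val_lt a
  have key : ((a.val + 1 : ℕ) : ZMod N) = a + 1 := by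
    rw [Nat.cast_add, Nat.cast_one, ZMod.natCast_zmod_val]
  rw [← key, ZMod.val_cast_of_lt (by omega)]

def corr (N : ℕ) (a b : ZMod N) : ℚ :=
  (if a.val = N-1 then -1 else 0) + (if b.val = N-1 then -1 else 0) +
  (if a.val = N-1 ∧ b.val = N-1 then (N:ℚ) else 0)

private lemma lap (N : ℕ) [NeZero N] (σ : GridGen N) (a b : ZMod N) :
    ∑ j : ZMod N, (Jpt (genPt N a b) (markPt N σ j) - Jpt (genPt N (a+1) b) (markPt N σ j)
      - Jpt (genPt N a (b+1)) (markPt N σ j) + Jpt (genPt N (a+1) (b+1)) (markPt N σ j))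
    = (if σ a = b then 1 else 0) + corr N a b := by
  have hval : ∀ x y : ZMod N, x = y ↔ x.val = y.val :=
    fun x y => ⟨fun h => by rw [h], fun h => ZMod.val_injective N h⟩
  simp only [jpt_eval]
  by_cases ha : a.val = N - 1 <;> by_cases hb : b.val = N - 1
  · -- TT case
    have key : ∀ j : ZMod N,
        ((if (j.val < a.val ↔ (σ j).val < b.val) then (1/2:ℚ) else 0)
        - (if (j.val < (a+1).val ↔ (σ j).val < b.val) then 1/2 else 0)
        - (if (j.val < a.val ↔ (σ j).val < (b+1).val) then 1/2 else 0)
        + (if (j.val < (a+1).val ↔ (σ j).val < (b+1).val) then 1/2 else 0))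
        = if j = a then 0 else if σ j = b then 0 else 1 := by
      intro j
      have hj : j.val < N := ZMod.val_lt j
      have ht : (σ j).val < N := ZMod.val_lt (σ j)
      have hNpos : 0 < N := Nat.pos_of_ne_zero (NeZero.ne N)
      simp only [val_add_one_top N a ha, val_add_one_top N b hb, hval, ha, hb]
      split_ifs
      all_goals try (exfalso; omega)
      all_goals norm_num
    rw [Finset.sum_congr rfl fun j _ => key j]
    have step2 : ∀ j : ZMod N, (if j = a then (0:ℚ) else if σ j = b then 0 else 1)
        = 1 - (if j = a then 1 else 0) - (if j = σ.symm b then 1 else 0)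
          + (if j = a then (if σ a = b then (1:ℚ) else 0) else 0) := by
      intro j
      by_cases h1 : j = a
      · subst h1
        by_cases h2 : σ j = b
        · have h3 : j = σ.symm b := by rw [← h2, Equiv.symm_apply_apply]
          simp [h2, h3]
        · have h3 : j ≠ σ.symm b := fun h => h2 (by rw [h, Equiv.apply_symm_apply])
          simp [h2, h3]
      · by_cases h2 : σ j = b
        · have h3 : j = σ.symm b := by rw [← h2, Equiv.symm_apply_apply]
          have h4 : ¬ (Equiv.symm σ) b = a := by rw [← h3]; exact h1
          simp [h1, h2, h3, h4]
        · have h3 : j ≠ σ.symm b := fun h => h2 (by rw [h, Equiv.apply_symm_apply])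
          simp [h1, h2, h3]
    rw [Finset.sum_congr rfl fun j _ => step2 j]
    simp only [Finset.sum_add_distrib, Finset.sum_sub_distrib, Finset.sum_const,
      Finset.card_univ, ZMod.card, Finset.sum_ite_eq', Finset.mem_univ, if_true,
      nsmul_eq_mul, mul_one]
    by_cases hab : σ a = b <;> simp [corr, ha, hb, hab] <;> ring
  · -- TN case
    have key : ∀ j : ZMod N,
        ((if (j.val < a.val ↔ (σ j).val < b.val) then (1/2:ℚ) else 0)
        - (if (j.val < (a+1).val ↔ (σ j).val < b.val) then 1/2 else 0)
        - (if (j.val < a.val ↔ (σ j).val < (b+1).val) then 1/2 else 0)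
        + (if (j.val < (a+1).val ↔ (σ j).val < (b+1).val) then 1/2 else 0))
        = if σ j = b then (if j = a then 0 else -1) else 0 := by
      intro j
      have hj : j.val < N := ZMod.val_lt j
      have ht : (σ j).val < N := ZMod.val_lt (σ j)
      have hbv : b.val < N := ZMod.val_lt b
      have hNpos : 0 < N := Nat.pos_of_ne_zero (NeZero.ne N)
      simp only [val_add_one_top N a ha, val_add_one_lt N b hb, hval, ha]
      split_ifs
      all_goals try (exfalso; omega)
      all_goals norm_num
    rw [Finset.sum_congr rfl fun j _ => key j]
    simp only [Equiv.apply_eq_iff_eq_symm_apply]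
    rw [Finset.sum_ite_eq']
    by_cases hab : σ a = b
    · have h3 : σ.symm b = a := by rw [← hab, Equiv.symm_apply_apply]
      simp [h3, corr, ha, hb, hab]
    · have h3 : σ.symm b ≠ a := fun h => hab (by rw [← h, Equiv.apply_symm_apply])
      simp [h3, Ne.symm h3, corr, ha, hb, hab]
  · -- NT case
    have key : ∀ j : ZMod N,
        ((if (j.val < a.val ↔ (σ j).val < b.val) then (1/2:ℚ) else 0)
        - (if (j.val < (a+1).val ↔ (σ j).val < b.val) then 1/2 else 0)
        - (if (j.val < a.val ↔ (σ j).val < (b+1).val) then 1/2 else 0)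
        + (if (j.val < (a+1).val ↔ (σ j).val < (b+1).val) then 1/2 else 0))
        = if j = a then (if σ j = b then 0 else -1) else 0 := by
      intro j
      have hj : j.val < N := ZMod.val_lt j
      have ht : (σ j).val < N := ZMod.val_lt (σ j)
      have hav : a.val < N := ZMod.val_lt a
      have hNpos : 0 < N := Nat.pos_of_ne_zero (NeZero.ne N)
      simp only [val_add_one_lt N a ha, val_add_one_top N b hb, hval, hb]
      split_ifs
      all_goals try (exfalso; omega)
      all_goals norm_num
    rw [Finset.sum_congr rfl fun j _ => key j]
    rw [Finset.sum_ite_eq']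
    by_cases hab : σ a = b <;> simp [corr, ha, hb, hab]
  · -- NN case
    have key : ∀ j : ZMod N,
        ((if (j.val < a.val ↔ (σ j).val < b.val) then (1/2:ℚ) else 0)
        - (if (j.val < (a+1).val ↔ (σ j).val < b.val) then 1/2 else 0)
        - (if (j.val < a.val ↔ (σ j).val < (b+1).val) then 1/2 else 0)
        + (if (j.val < (a+1).val ↔ (σ j).val < (b+1).val) then 1/2 else 0))
        = if j = a then (if σ j = b then 1 else 0) else 0 := by
      intro j
      have hj : j.val < N := ZMod.val_lt j
      have ht : (σ j).val < N := ZMod.val_lt (σ j)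
      have hav : a.val < N := ZMod.val_lt a
      have hbv : b.val < N := ZMod.val_lt b
      have hNpos : 0 < N := Nat.pos_of_ne_zero (NeZero.ne N)
      simp only [val_add_one_lt N a ha, val_add_one_lt N b hb, hval]
      split_ifs
      all_goals try (exfalso; omega)
      all_goals norm_num
    rw [Finset.sum_congr rfl fun j _ => key j]
    rw [Finset.sum_ite_eq']
    by_cases hab : σ a = b <;> simp [corr, ha, hb, hab]

private lemma isGridDomain_iff (N : ℕ) (x y : GridGen N) (D : ZMod N → ZMod N → ℤ) :
    IsGridDomain N x y D ↔ ∀ a b : ZMod N,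
      cornerSum N D a b = (if x a = b then 1 else 0) - (if y a = b then 1 else 0) := by
  unfold IsGridDomain
  refine forall_congr' fun a => forall_congr' fun b => ?_
  by_cases h1 : x a = b <;> by_cases h2 : y a = b <;> simp [h1, h2]

private lemma sum_shift (N : ℕ) [NeZero N] (f : ZMod N → ℚ) :
    (∑ a : ZMod N, f (a - 1)) = ∑ a : ZMod N, f a :=
  Equiv.sum_comp (Equiv.subRight (1 : ZMod N)) f

private lemma sum_by_parts (N : ℕ) [NeZero N] (c D : ZMod N → ZMod N → ℚ) :
    (∑ a : ZMod N, ∑ b : ZMod N, c a b * (D a b - D (a-1) b - D a (b-1) + D (a-1) (b-1)))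
    = ∑ a : ZMod N, ∑ b : ZMod N,
        (c a b - c (a+1) b - c a (b+1) + c (a+1) (b+1)) * D a b := by
  have e1 : (∑ a : ZMod N, ∑ b : ZMod N, c a b * D (a-1) b)
      = ∑ a : ZMod N, ∑ b : ZMod N, c (a+1) b * D a b := by
    rw [← sum_shift N (fun a => ∑ b : ZMod N, c (a+1) b * D a b)]
    simp
  have e2 : (∑ a : ZMod N, ∑ b : ZMod N, c a b * D a (b-1))
      = ∑ a : ZMod N, ∑ b : ZMod N, c a (b+1) * D a b := by
    refine Finset.sum_congr rfl fun a _ => ?_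
    rw [← sum_shift N (fun b => c a (b+1) * D a b)]
    simp
  have e3a : (∑ a : ZMod N, ∑ b : ZMod N, c a b * D (a-1) (b-1))
      = ∑ a : ZMod N, ∑ b : ZMod N, c (a+1) b * D a (b-1) := by
    rw [← sum_shift N (fun a => ∑ b : ZMod N, c (a+1) b * D a (b-1))]
    simp
  have e3b : (∑ a : ZMod N, ∑ b : ZMod N, c (a+1) b * D a (b-1))
      = ∑ a : ZMod N, ∑ b : ZMod N, c (a+1) (b+1) * D a b := by
    refine Finset.sum_congr rfl fun a _ => ?_
    rw [← sum_shift N (fun b => c (a+1) (b+1) * D a b)]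
    simp
  simp only [mul_sub, mul_add, sub_mul, add_mul, Finset.sum_sub_distrib,
    Finset.sum_add_distrib]
  rw [e1, e2, e3a, e3b]

private lemma sum_pick (N : ℕ) [NeZero N] (c : ZMod N → ZMod N → ℚ) (x y : GridGen N) :
    (∑ a : ZMod N, ∑ b : ZMod N,
        c a b * ((if x a = b then (1:ℚ) else 0) - (if y a = b then 1 else 0)))
    = ∑ a : ZMod N, (c a (x a) - c a (y a)) := by
  refine Finset.sum_congr rfl fun a _ => ?_
  simp only [mul_sub, mul_ite, mul_one, mul_zero, Finset.sum_sub_distrib]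
  rw [Finset.sum_ite_eq, Finset.sum_ite_eq]
  simp

private lemma sum_pick' (N : ℕ) [NeZero N] (D : ZMod N → ZMod N → ℚ) (x y : GridGen N) :
    (∑ a : ZMod N, ∑ b : ZMod N,
        ((if x a = b then (1:ℚ) else 0) - (if y a = b then 1 else 0)) * D a b)
    = ∑ a : ZMod N, (D a (x a) - D a (y a)) := by
  refine Finset.sum_congr rfl fun a _ => ?_
  simp only [sub_mul, ite_mul, one_mul, zero_mul, Finset.sum_sub_distrib]
  rw [Finset.sum_ite_eq, Finset.sum_ite_eq]
  simp

private lemma corner_zero_rect (N : ℕ) [NeZero N] (E : ZMod N → ZMod N → ℤ)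
    (h : ∀ a b : ZMod N, cornerSum N E a b = 0) :
    ∀ a b a' b' : ZMod N, E a b + E a' b' = E a b' + E a' b := by
  have step : ∀ a b : ZMod N, E a b - E (a-1) b = E a (b-1) - E (a-1) (b-1) := by
    intro a b; have := h a b; unfold cornerSum at this; omega
  have claim1 : ∀ (m : ℕ) (a b : ZMod N),
      E a b - E (a-1) b = E a (b - (m : ZMod N)) - E (a-1) (b - (m : ZMod N)) := by
    intro m
    induction m with
    | zero => intro a b; simp
    | succ n ih =>
      intro a b
      have h1 := ih a b
      have h2 := step a (b - (n : ZMod N))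
      have e : b - ((n+1 : ℕ) : ZMod N) = (b - (n : ZMod N)) - 1 := by push_cast; ring
      rw [e]
      omega
  have claim1' : ∀ (a b b' : ZMod N), E a b - E (a-1) b = E a b' - E (a-1) b' := by
    intro a b b'
    have := claim1 ((b - b').val) a b
    rwa [ZMod.natCast_zmod_val, show b - (b - b') = b' from by ring] at this
  have claim2 : ∀ (m : ℕ) (a b b' : ZMod N),
      E a b - E (a - (m : ZMod N)) b = E a b' - E (a - (m : ZMod N)) b' := by
    intro m
    induction m with
    | zero => intro a b b'; simp
    | succ n ih =>
      intro a b b'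
      have h1 := ih a b b'
      have h2 := claim1' (a - (n : ZMod N)) b b'
      have e : a - ((n+1 : ℕ) : ZMod N) = (a - (n : ZMod N)) - 1 := by push_cast; ring
      rw [e]
      omega
  intro a b a' b'
  have := claim2 ((a - a').val) a b b'
  rw [ZMod.natCast_zmod_val, show a - (a - a') = a' from by ring] at this
  omega

noncomputable def cfun (N : ℕ) [NeZero N] (σO σX : GridGen N) (a b : ZMod N) : ℚ :=
  ∑ j : ZMod N, (Jpt (genPt N a b) (markPt N σX j) - Jpt (genPt N a b) (markPt N σO j))

private lemma cfun_lap (N : ℕ) [NeZero N] (σO σX : GridGen N) (a b : ZMod N) :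
    cfun N σO σX a b - cfun N σO σX (a+1) b - cfun N σO σX a (b+1) + cfun N σO σX (a+1) (b+1)
    = (if σX a = b then (1:ℚ) else 0) - (if σO a = b then 1 else 0) := by
  have hX := lap N σX a b
  have hO := lap N σO a b
  unfold cfun
  simp only [Finset.sum_sub_distrib, Finset.sum_add_distrib] at hX hO ⊢
  linarith

private lemma alex_diff (N : ℕ) [NeZero N] (σO σX : GridGen N) (x y : GridGen N) :
    AlexGrading N σO σX x - AlexGrading N σO σX y
    = ∑ a : ZMod N, (cfun N σO σX a (x a) - cfun N σO σX a (y a)) := by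
  unfold AlexGrading cfun
  simp only [Finset.sum_sub_distrib, Finset.sum_add_distrib]
  ring

private lemma minus_le_alex (N : ℕ) [NeZero N] (σO σX : GridGen N)
    (yl xk : GridGen N × (ZMod N → ℕ)) (h : MinusLE N σO σX yl xk) :
    AlexGrading N σO σX xk.1 - ∑ i : ZMod N, (xk.2 i : ℚ) =
      AlexGrading N σO σX yl.1 - ∑ i : ZMod N, (yl.2 i : ℚ) := by
  obtain ⟨D, hD, hpos, hXv, hOv⟩ := h
  have hD' : ∀ a b : ZMod N, ((D a b : ℚ) - D (a-1) b - D a (b-1) + D (a-1) (b-1))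
      = (if xk.1 a = b then (1:ℚ) else 0) - (if yl.1 a = b then 1 else 0) := by
    intro a b
    have h := (isGridDomain_iff N xk.1 yl.1 D).mp hD a b
    simp only [cornerSum] at h
    by_cases h1 : xk.1 a = b <;> by_cases h2 : yl.1 a = b <;>
      simp only [h1, h2, if_true, if_false, ite_true, ite_false] at h ⊢ <;>
      exact_mod_cast h
  have key : (∑ a : ZMod N, (cfun N σO σX a (xk.1 a) - cfun N σO σX a (yl.1 a)))
      = ∑ a : ZMod N, ((D a (σX a) : ℚ) - (D a (σO a) : ℚ)) := by
    calc (∑ a : ZMod N, (cfun N σO σX a (xk.1 a) - cfun N σO σX a (yl.1 a)))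
        = ∑ a : ZMod N, ∑ b : ZMod N, cfun N σO σX a b *
            ((if xk.1 a = b then (1:ℚ) else 0) - (if yl.1 a = b then 1 else 0)) :=
          (sum_pick N (cfun N σO σX) xk.1 yl.1).symm
      _ = ∑ a : ZMod N, ∑ b : ZMod N, cfun N σO σX a b *
            (((D a b : ℚ)) - (D (a-1) b : ℚ) - (D a (b-1) : ℚ) + (D (a-1) (b-1) : ℚ)) := by
          refine Finset.sum_congr rfl fun a _ => Finset.sum_congr rfl fun b _ => ?_
          rw [hD' a b]
      _ = ∑ a : ZMod N, ∑ b : ZMod N,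
            (cfun N σO σX a b - cfun N σO σX (a+1) b - cfun N σO σX a (b+1)
              + cfun N σO σX (a+1) (b+1)) * (D a b : ℚ) :=
          sum_by_parts N (cfun N σO σX) (fun p q => (D p q : ℚ))
      _ = ∑ a : ZMod N, ∑ b : ZMod N,
            ((if σX a = b then (1:ℚ) else 0) - (if σO a = b then 1 else 0)) * (D a b : ℚ) := by
          refine Finset.sum_congr rfl fun a _ => Finset.sum_congr rfl fun b _ => ?_
          rw [cfun_lap N σO σX a b]
      _ = ∑ a : ZMod N, ((D a (σX a) : ℚ) - (D a (σO a) : ℚ)) :=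
          sum_pick' N (fun p q => (D p q : ℚ)) σX σO
  have key2 : (∑ a : ZMod N, ((D a (σX a) : ℚ) - (D a (σO a) : ℚ)))
      = (∑ i : ZMod N, (xk.2 i : ℚ)) - ∑ i : ZMod N, (yl.2 i : ℚ) := by
    rw [← Finset.sum_sub_distrib]
    refine Finset.sum_congr rfl fun a _ => ?_
    rw [hXv a, hOv a]
    push_cast
    ring
  have had := alex_diff N σO σX xk.1 yl.1
  rw [key, key2] at had
  linarith

/-- If the grid diagram represents a knot, then the relation
`⪯` on pairs `(x, k)` (a generator together with `k : ℤ/N → ℕ`) is a partial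
order, and comparable elements have equal Alexander grading:
if `(y,l) ⪯ (x,k)` then `A(x) − Σᵢ k i = A(y) − Σᵢ l i`. -/
theorem minus_relation_is_partial_order (N : ℕ) [NeZero N] (hN : 2 ≤ N)
    (σO σX : GridGen N) (hσ : ∀ i : ZMod N, σO i ≠ σX i)
    (hknot : GridIsKnot N σO σX) :
    (∀ p : GridGen N × (ZMod N → ℕ), MinusLE N σO σX p p) ∧
    (∀ p q r : GridGen N × (ZMod N → ℕ),
      MinusLE N σO σX p q → MinusLE N σO σX q r → MinusLE N σO σX p r) ∧
    (∀ p q : GridGen N × (ZMod N → ℕ),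
      MinusLE N σO σX p q → MinusLE N σO σX q p → p = q) ∧
    ∀ yl xk : GridGen N × (ZMod N → ℕ), MinusLE N σO σX yl xk →
      AlexGrading N σO σX xk.1 - ∑ i : ZMod N, (xk.2 i : ℚ) =
        AlexGrading N σO σX yl.1 - ∑ i : ZMod N, (yl.2 i : ℚ) := by
  refine ⟨?_, ?_, ?_, ?_⟩
  · -- reflexivity
    intro p
    refine ⟨fun _ _ => 0, ?_, fun _ _ => le_refl 0, fun _ => rfl,
      fun i => by show (0:ℤ) = (p.2 i : ℤ) - (p.2 i : ℤ); omega⟩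
    intro a b
    have hcontra : ¬ (p.1 a = b ∧ p.1 a ≠ b) := fun h => h.2 h.1
    simp [cornerSum, hcontra]
  · -- transitivity
    rintro p q r ⟨D1, h1, pos1, x1, o1⟩ ⟨D2, h2, pos2, x2, o2⟩
    refine ⟨fun i j => D1 i j + D2 i j, ?_,
      fun i j => by
        have a1 := pos1 i j; have a2 := pos2 i j
        show (0:ℤ) ≤ D1 i j + D2 i j; omega,
      fun i => by
        have a1 := x1 i; have a2 := x2 i
        show D1 i (σX i) + D2 i (σX i) = 0; omega,
      fun i => by
        have a1 := o1 i; have a2 := o2 i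
        show D1 i (σO i) + D2 i (σO i) = (p.2 i : ℤ) - (r.2 i : ℤ); omega⟩
    rw [isGridDomain_iff]
    intro a b
    have e1 := (isGridDomain_iff N q.1 p.1 D1).mp h1 a b
    have e2 := (isGridDomain_iff N r.1 q.1 D2).mp h2 a b
    simp only [cornerSum] at e1 e2 ⊢
    beta_reduce
    split_ifs at e1 e2 ⊢ <;> omega
  · -- antisymmetry
    rintro p q ⟨D1, h1, pos1, x1, o1⟩ ⟨D2, h2, pos2, x2, o2⟩
    have hcz : ∀ a b : ZMod N, cornerSum N (fun i j => D1 i j + D2 i j) a b = 0 := by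
      intro a b
      have e1 := (isGridDomain_iff N q.1 p.1 D1).mp h1 a b
      have e2 := (isGridDomain_iff N p.1 q.1 D2).mp h2 a b
      simp only [cornerSum] at e1 e2 ⊢
      beta_reduce
      split_ifs at e1 e2 <;> omega
    have rect := corner_zero_rect N (fun i j => D1 i j + D2 i j) hcz
    have hE0 : ∀ a b : ZMod N, D1 a b + D2 a b = 0 := by
      intro a b
      have k1 : D1 a (σX a) + D2 a (σX a) = 0 := by
        have a1 := x1 a; have a2 := x2 a; omega
      have k2 : D1 (σX.symm b) b + D2 (σX.symm b) b = 0 := by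
        have h1' := x1 (σX.symm b); have h2' := x2 (σX.symm b)
        rw [Equiv.apply_symm_apply] at h1' h2'
        omega
      have r := rect a (σX a) (σX.symm b) b
      beta_reduce at r
      have n1 := pos1 a b; have n2 := pos2 a b
      have n3 := pos1 (σX.symm b) (σX a); have n4 := pos2 (σX.symm b) (σX a)
      omega
    have hD1 : ∀ a b : ZMod N, D1 a b = 0 := by
      intro a b; have := hE0 a b; have := pos1 a b; have := pos2 a b; omega
    have hxy : p.1 = q.1 := by
      apply Equiv.ext
      intro a
      by_cases hpa : p.1 a = q.1 a
      · exact hpa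
      · exfalso
        have e1 := h1 a (q.1 a)
        simp [cornerSum, hD1, hpa] at e1
    have hk : p.2 = q.2 := funext fun i => by
      have := o1 i
      rw [hD1] at this
      omega
    exact Prod.ext hxy hk
  · exact minus_le_alex N σO σX
end

section
/- Let P be a finite poset with a unique minimal element which admits a grading assignment and in which every closed interval is shellable. Then any two sign assignments on P are equivalent: if s and s′ are sign assignments on P, then s′ can be obtained from s by a finite sequence of moves, each of which chooses an element p of P and reverses the sign of every covering relation having p as one of its two members. -/
variable {α : Type*}

/-- The closed interval of the subposet `S` (for the order relation `le`)
between `a` and `b`. -/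
def orderInterval (le : α → α → Prop) (S : Set α) (a b : α) : Set α :=
  {z | z ∈ S ∧ le a z ∧ le z b}
/-- A finset is a chain of the subposet `S` for the order relation `le`. -/
def IsChainFinsetIn (le : α → α → Prop) (S : Set α) (C : Finset α) : Prop :=
  (↑C : Set α) ⊆ S ∧ ∀ u ∈ C, ∀ v ∈ C, u ≠ v → (le u v ∨ le v u)

/-- A maximal chain of the subposet `S`: a chain of `S` which is not properly
contained in any other chain of `S`. -/
def IsMaxChainFinsetIn (le : α → α → Prop) (S : Set α) (C : Finset α) : Prop :=
  IsChainFinsetIn le S C ∧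
    ∀ C' : Finset α, IsChainFinsetIn le S C' → C ⊆ C' → C' = C

/-- The subposet `S` is graded: in every closed interval all maximal chains
have the same length (cardinality). -/
def IsGradedIn (le : α → α → Prop) (S : Set α) : Prop :=
  ∀ a ∈ S, ∀ b ∈ S, le a b → ∀ C₁ C₂ : Finset α,
    IsMaxChainFinsetIn le (orderInterval le S a b) C₁ →
    IsMaxChainFinsetIn le (orderInterval le S a b) C₂ → C₁.card = C₂.card

/-- `r` is a shelling order on the maximal chains of the subposet `S`: a strict
linear order on maximal chains such that whenever `m₁ < m₂`, there exist a maximal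
chain `m₃ < m₂` and an element `x ∈ m₂` with `m₁ ∩ m₂ ⊆ m₃ ∩ m₂ = m₂ \ {x}`. -/
def IsShellingOrder [DecidableEq α] (le : α → α → Prop) (S : Set α)
    (r : Finset α → Finset α → Prop) : Prop :=
  (∀ C, IsMaxChainFinsetIn le S C → ¬r C C) ∧
  (∀ C₁ C₂ C₃, IsMaxChainFinsetIn le S C₁ → IsMaxChainFinsetIn le S C₂ →
    IsMaxChainFinsetIn le S C₃ → r C₁ C₂ → r C₂ C₃ → r C₁ C₃) ∧
  (∀ C₁ C₂, IsMaxChainFinsetIn le S C₁ → IsMaxChainFinsetIn le S C₂ → C₁ ≠ C₂ →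
    r C₁ C₂ ∨ r C₂ C₁) ∧
  (∀ m₁ m₂, IsMaxChainFinsetIn le S m₁ → IsMaxChainFinsetIn le S m₂ → r m₁ m₂ →
    ∃ m₃, IsMaxChainFinsetIn le S m₃ ∧ r m₃ m₂ ∧
      ∃ x ∈ m₂, m₁ ∩ m₂ ⊆ m₃ ∩ m₂ ∧ m₃ ∩ m₂ = m₂.erase x)

/-- The subposet `S` is shellable. -/
def IsShellableIn [DecidableEq α] (le : α → α → Prop) (S : Set α) : Prop :=
  ∃ r : Finset α → Finset α → Prop, IsShellingOrder le S r
/-- The covering relation within the subposet `S`. -/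
def CovRelIn (le : α → α → Prop) (S : Set α) (u v : α) : Prop :=
  u ∈ S ∧ v ∈ S ∧ le u v ∧ u ≠ v ∧ ∀ w ∈ S, le u w → le w v → w = u ∨ w = v

/-- `L` is a maximal chain of the closed interval of the subposet `S` between `a`
and `b`, listed in increasing order: consecutive entries are covers in the
interval, the list starts at `a` and ends at `b`. -/
def IsMaxChainListIn (le : α → α → Prop) (S : Set α) (a b : α) (L : List α) : Prop :=
  (∀ z ∈ L, z ∈ orderInterval le S a b) ∧
    L.Chain' (CovRelIn le (orderInterval le S a b)) ∧
    L.head? = some a ∧ L.getLast? = some b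

/-- The label sequence of a chain, listed in increasing order. -/
def labelSeq {Λ : Type*} (f : α → α → Λ) (L : List α) : List Λ :=
  (L.zip L.tail).map fun p => f p.1 p.2

/-- `f` is an EL-labeling of the subposet `S`: in every closed interval there is a
unique maximal chain with weakly increasing label sequence, and its label
sequence is lexicographically smaller than that of every other maximal chain of
the interval. -/
def IsELShellingIn {Λ : Type*} [LinearOrder Λ] (le : α → α → Prop) (S : Set α)
    (f : α → α → Λ) : Prop :=
  ∀ a ∈ S, ∀ b ∈ S, le a b →
    ∃ L₀ : List α, IsMaxChainListIn le S a b L₀ ∧ (labelSeq f L₀).Chain' (· ≤ ·) ∧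
      (∀ L : List α, IsMaxChainListIn le S a b L →
        (labelSeq f L).Chain' (· ≤ ·) → L = L₀) ∧
      (∀ L : List α, IsMaxChainListIn le S a b L → L ≠ L₀ →
        List.Lex (· < ·) (labelSeq f L₀) (labelSeq f L))

/-- The subposet `S` is EL-shellable. -/
def IsELShellableIn (le : α → α → Prop) (S : Set α) : Prop :=
  ∃ (Λ : Type) (_ : LinearOrder Λ) (f : α → α → Λ), IsELShellingIn le S f

/-- The covering relation of the poset with order relation `le`. -/
def CovRel (le : α → α → Prop) (u v : α) : Prop :=
  le u v ∧ u ≠ v ∧ ∀ w : α, le u w → le w v → w = u ∨ w = v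

/-- A sign assignment: a function assigning `±1` to each covering relation such
that every closed interval of length 3 contains exactly two maximal chains and
the product of the signs of its four covering relations is `−1`. -/
def IsSignAssignment (le : α → α → Prop) (s : α → α → ℤ) : Prop :=
  (∀ u v : α, CovRel le u v → s u v = 1 ∨ s u v = -1) ∧
  ∀ u v : α, le u v →
    (∀ L : List α, IsMaxChainListIn le Set.univ u v L → L.length = 3) →
    ∃ p q : α, p ≠ q ∧ CovRel le u p ∧ CovRel le p v ∧ CovRel le u q ∧
      CovRel le q v ∧ (∀ w : α, CovRel le u w → CovRel le w v → w = p ∨ w = q) ∧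
      s u p * s p v * s u q * s q v = -1


/-! Put `r (u ⋖ v) = s' (u ⋖ v) * s (u ⋖ v)`. Since `s` and `s'` both multiply to `-1` around
every diamond `u ⋖ x, x' ⋖ v`, the ratio `r` multiplies to `1` there: the two paths of a diamond
carry the same `r`-weight. In a graded interval, a maximal chain and the chain preceding it that
a shelling provides differ in a single element, i.e. by one diamond, so they have equal weight,
and descending the shelling order all maximal chains of a shellable interval have equal weight.
Hence `ε p`, the weight of any maximal chain of `[z, p]`, is well defined, and extending a chain
of `[z, u]` by `u ⋖ v` gives `ε v = ε u * r (u ⋖ v)`, which is `s' = ε ε s`. -/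

open Finset

section Order

variable [PartialOrder α]

theorem covRel_iff_covBy {u v : α} : CovRel (· ≤ ·) u v ↔ u ⋖ v := by
  refine ⟨fun ⟨huv, hne, h⟩ => ⟨huv.lt_of_ne hne, fun t hut htv => ?_⟩,
    fun h => ⟨h.le, h.ne, fun t hut htv => h.eq_or_eq hut htv⟩⟩
  rcases h t hut.le htv.le with rfl | rfl
  exacts [hut.ne rfl, htv.ne rfl]

theorem CovRelIn.covBy {a b u v : α}
    (h : CovRelIn (· ≤ ·) (orderInterval (· ≤ ·) Set.univ a b) u v) : u ⋖ v := by
  obtain ⟨hu, hv, huv, hne, h⟩ := h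
  refine covRel_iff_covBy.1 ⟨huv, hne, fun t hut htv => h t ?_ hut htv⟩
  exact ⟨trivial, hu.2.1.trans hut, htv.trans hv.2.2⟩

theorem le_of_forall_isMin_eq [Finite α] {z : α} (huniq : ∀ w : α, IsMin w → w = z) (p : α) :
    z ≤ p := by
  obtain ⟨m, hmp, hm⟩ := exists_minimal_le_of_wellFoundedLT (fun _ => True) p trivial
  exact huniq m (minimal_true.1 hm) ▸ hmp

end Order

theorem List.IsChain.length_eq_of_rel_imp_add_one {g : α → ℤ} {R : α → α → Prop}
    (hR : ∀ u v, R u v → g v = g u + 1) :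
    ∀ {L : List α} {a b : α}, L.IsChain R → L.head? = some a → L.getLast? = some b →
      (L.length : ℤ) = g b - g a + 1
  | [], _, _, _, ha, _ => by simp at ha
  | [u], _, _, _, ha, hb => by simp_all
  | u :: v :: L, a, b, hL, ha, hb => by
    rw [List.isChain_cons_cons] at hL
    simp only [List.head?_cons, Option.some.injEq] at ha
    subst ha
    have := length_eq_of_rel_imp_add_one hR hL.2 rfl (by simpa using hb)
    simp only [List.length_cons, Nat.cast_add, Nat.cast_one] at this ⊢
    linarith [hR _ _ hL.1]

section Grading

variable [PartialOrder α] {g : α → ℤ}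

theorem strictMono_of_covBy_eq_add_one [Finite α] (hg : ∀ u v : α, u ⋖ v → g v = g u + 1) :
    StrictMono g := by
  intro u
  induction u using WellFoundedGT.induction with
  | _ u ih =>
    intro v huv
    obtain ⟨w, huw, hwv⟩ := exists_covBy_le_of_lt huv
    have hgw := hg u w huw
    rcases hwv.lt_or_eq with hwv | rfl
    · linarith [ih w huw.lt hwv]
    · omega

theorem StrictMono.covBy_of_le_or_le (hg : StrictMono g) {u v : α} (h : u ≤ v ∨ v ≤ u)
    (huv : g v = g u + 1) : u ⋖ v := by
  have hlt : u < v := by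
    rcases h with h | h
    · exact h.lt_of_ne fun e => by simp [e] at huv
    · exact absurd (hg.monotone h) (by omega)
  exact ⟨hlt, fun t hut htv => by linarith [hg hut, hg htv]⟩

end Grading

section SignAssignment

variable [PartialOrder α] {g : α → ℤ} {s s' : α → α → ℤ}

theorem IsSignAssignment.isUnit (hs : IsSignAssignment (· ≤ ·) s) {u v : α} (h : u ⋖ v) :
    IsUnit (s u v) :=
  Int.isUnit_iff.2 (hs.1 u v (covRel_iff_covBy.2 h))

theorem IsSignAssignment.diamond_prod (hg : ∀ u v : α, u ⋖ v → g v = g u + 1)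
    (hs : IsSignAssignment (· ≤ ·) s) {u x x' v : α} (hxx' : x ≠ x') (hux : u ⋖ x)
    (hxv : x ⋖ v) (hux' : u ⋖ x') (hx'v : x' ⋖ v) :
    s u x * s x v * s u x' * s x' v = -1 := by
  have hlen : ∀ L : List α, IsMaxChainListIn (· ≤ ·) Set.univ u v L → L.length = 3 := by
    rintro L ⟨-, hL, hu, hv⟩
    have := hL.length_eq_of_rel_imp_add_one (fun _ _ h => hg _ _ (CovRelIn.covBy h)) hu hv
    have := hg _ _ hux
    have := hg _ _ hxv
    omega
  obtain ⟨p, q, hpq, hup, hpv, huq, hqv, hmid, hprod⟩ := hs.2 u v (hux.le.trans hxv.le) hlen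
  rw [← covRel_iff_covBy] at hux hxv hux' hx'v
  rcases hmid x hux hxv with rfl | rfl <;> rcases hmid x' hux' hx'v with rfl | rfl
  · exact absurd rfl hxx'
  · exact hprod
  · linear_combination hprod
  · exact absurd rfl hxx'

theorem IsSignAssignment.diamond_ratio (hg : ∀ u v : α, u ⋖ v → g v = g u + 1)
    (hs : IsSignAssignment (· ≤ ·) s) (hs' : IsSignAssignment (· ≤ ·) s') {u x x' v : α}
    (hxx' : x ≠ x') (hux : u ⋖ x) (hxv : x ⋖ v) (hux' : u ⋖ x') (hx'v : x' ⋖ v) :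
    s' u x * s u x * (s' x v * s x v) = s' u x' * s u x' * (s' x' v * s x' v) := by
  have hq := Int.isUnit_mul_self ((hs.isUnit hux').mul (hs.isUnit hx'v))
  have hq' := Int.isUnit_mul_self ((hs'.isUnit hux').mul (hs'.isUnit hx'v))
  have hp : s u x * s x v = -(s u x' * s x' v) := by
    linear_combination s u x' * s x' v * hs.diamond_prod hg hxx' hux hxv hux' hx'v
      - s u x * s x v * hq
  have hp' : s' u x * s' x v = -(s' u x' * s' x' v) := by
    linear_combination s' u x' * s' x' v * hs'.diamond_prod hg hxx' hux hxv hux' hx'v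
      - s' u x * s' x v * hq'
  linear_combination s' u x * s' x v * hp - s u x' * s x' v * hp'

end SignAssignment

section MaxChains

theorem isChainFinsetIn_iff {le : α → α → Prop} {S : Set α} {C : Finset α} :
    IsChainFinsetIn le S C ↔ ↑C ⊆ S ∧ IsChain le (C : Set α) :=
  Iff.rfl

theorem exists_isMaxChainFinsetIn [Finite α] (le : α → α → Prop) (S : Set α) :
    ∃ C, IsMaxChainFinsetIn le S C := by
  obtain ⟨C, hC⟩ := Set.toFinite {C : Finset α | IsChainFinsetIn le S C} |>.exists_maximal
    ⟨∅, by simp [IsChainFinsetIn]⟩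
  exact ⟨C, hC.1, fun C' hC' hCC' => (hC.2 hC' hCC').antisymm hCC'⟩

variable [DecidableEq α]

theorem IsMaxChainFinsetIn.mem_of_forall {le : α → α → Prop} {S : Set α} {C : Finset α}
    (hC : IsMaxChainFinsetIn le S C) {t : α} (ht : t ∈ S) (h : ∀ c ∈ C, le c t ∨ le t c) :
    t ∈ C := by
  have hchain : IsChainFinsetIn le S (insert t C) := by
    rw [isChainFinsetIn_iff, coe_insert, Set.insert_subset_iff]
    exact ⟨⟨ht, hC.1.1⟩, IsChain.insert hC.1.2 fun c hc _ => (h c hc).symm⟩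
  rw [← hC.2 _ hchain (subset_insert t C)]
  exact mem_insert_self t C

variable [PartialOrder α] {a b : α} {C : Finset α}

omit [DecidableEq α] in
theorem IsMaxChainFinsetIn.isChain {S : Set α} (hC : IsMaxChainFinsetIn (· ≤ ·) S C) :
    IsChain (· ≤ ·) (C : Set α) :=
  hC.1.2

theorem IsMaxChainFinsetIn.left_mem (hC : IsMaxChainFinsetIn (· ≤ ·) (Set.Icc a b) C)
    (hab : a ≤ b) : a ∈ C :=
  hC.mem_of_forall ⟨le_rfl, hab⟩ fun _ hc => Or.inr (hC.1.1 hc).1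

theorem IsMaxChainFinsetIn.right_mem (hC : IsMaxChainFinsetIn (· ≤ ·) (Set.Icc a b) C)
    (hab : a ≤ b) : b ∈ C :=
  hC.mem_of_forall ⟨hab, le_rfl⟩ fun _ hc => Or.inl (hC.1.1 hc).2

theorem IsMaxChainFinsetIn.covBy_of_forall_not_mem
    (hC : IsMaxChainFinsetIn (· ≤ ·) (Set.Icc a b) C) {w x : α} (hw : w ∈ C) (hx : x ∈ C)
    (hwx : w < x) (h : ∀ c ∈ C, ¬(w < c ∧ c < x)) : w ⋖ x := by
  refine ⟨hwx, fun t hwt htx => h t ?_ ⟨hwt, htx⟩⟩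
  refine hC.mem_of_forall ⟨(hC.1.1 hw).1.trans hwt.le, htx.le.trans (hC.1.1 hx).2⟩ fun c hc => ?_
  rcases hC.isChain.total hc hw with hcw | hwc
  · exact Or.inl (hcw.trans hwt.le)
  rcases hC.isChain.total hc hx with hcx | hxc
  · rcases hwc.lt_or_eq with hwc | rfl
    · rcases hcx.lt_or_eq with hcx | rfl
      · exact absurd ⟨hwc, hcx⟩ (h c hc)
      · exact Or.inr htx.le
    · exact Or.inl hwt.le
  · exact Or.inr (htx.le.trans hxc)

theorem IsMaxChainFinsetIn.exists_covBy_mem (hC : IsMaxChainFinsetIn (· ≤ ·) (Set.Icc a b) C)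
    (hab : a ≤ b) {x : α} (hx : x ∈ C) (hxa : x ≠ a) : ∃ w ∈ C, w ⋖ x := by
  classical
  obtain ⟨w, hw⟩ := (C.filter (· < x)).exists_maximal
    ⟨a, mem_filter.2 ⟨hC.left_mem hab, (hC.1.1 hx).1.lt_of_ne (Ne.symm hxa)⟩⟩
  obtain ⟨hwC, hwx⟩ := mem_filter.1 hw.1
  exact ⟨w, hwC, hC.covBy_of_forall_not_mem hwC hx hwx fun c hc hwcx =>
    hw.not_gt (mem_filter.2 ⟨hc, hwcx.2⟩) hwcx.1⟩

theorem IsMaxChainFinsetIn.exists_mem_covBy (hC : IsMaxChainFinsetIn (· ≤ ·) (Set.Icc a b) C)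
    (hab : a ≤ b) {x : α} (hx : x ∈ C) (hxb : x ≠ b) : ∃ y ∈ C, x ⋖ y := by
  classical
  obtain ⟨y, hy⟩ := (C.filter (x < ·)).exists_minimal
    ⟨b, mem_filter.2 ⟨hC.right_mem hab, (hC.1.1 hx).2.lt_of_ne hxb⟩⟩
  obtain ⟨hyC, hxy⟩ := mem_filter.1 hy.1
  exact ⟨y, hyC, hC.covBy_of_forall_not_mem hx hyC hxy fun c hc hxcy =>
    hy.not_lt (mem_filter.2 ⟨hc, hxcy.1⟩) hxcy.2⟩

theorem IsMaxChainFinsetIn.insert_of_covBy {u v : α}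
    (hC : IsMaxChainFinsetIn (· ≤ ·) (Set.Icc a u) C) (hau : a ≤ u) (huv : u ⋖ v) :
    IsMaxChainFinsetIn (· ≤ ·) (Set.Icc a v) (insert v C) := by
  have hCv : ∀ c ∈ C, c ≤ v := fun c hc => (hC.1.1 hc).2.trans huv.le
  refine ⟨?_, fun C' hC' hsub => Finset.Subset.antisymm (fun t ht => ?_) hsub⟩
  · rw [isChainFinsetIn_iff, coe_insert, Set.insert_subset_iff]
    exact ⟨⟨⟨hau.trans huv.le, le_rfl⟩, fun c hc => ⟨(hC.1.1 hc).1, hCv c hc⟩⟩,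
      hC.isChain.insert fun c hc _ => Or.inr (hCv c hc)⟩
  rcases eq_or_ne t v with rfl | htv
  · exact mem_insert_self t C
  have hC'chain : IsChain (· ≤ ·) (C' : Set α) := hC'.2
  have htu : t ≤ u := by
    rcases hC'chain.total ht (hsub (mem_insert_of_mem (hC.right_mem hau))) with htu | hut
    · exact htu
    · exact ((huv.eq_or_eq hut (hC'.1 ht).2).resolve_right htv).le
  exact mem_insert_of_mem (hC.mem_of_forall ⟨(hC'.1 ht).1, htu⟩ fun c hc =>
    hC'chain.total (hsub (mem_insert_of_mem hc)) ht)

end MaxChains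

section CoverWeight

open scoped Classical

variable {M : Type*} [CommMonoid M] [PartialOrder α] [DecidableEq α]

/-- On a chain the covering pairs are the consecutive pairs, so this is the product of `r` along
the chain. -/
noncomputable def coverWeight (r : α → α → M) (C : Finset α) : M :=
  ∏ y ∈ C, ∏ x ∈ C with x ⋖ y, r x y

variable {r : α → α → M}

theorem coverWeight_insert {x : α} {D : Finset α} (hx : x ∉ D) :
    coverWeight r (insert x D) =
      (∏ c ∈ D with c ⋖ x, r c x) * (∏ d ∈ D with x ⋖ d, r x d) * coverWeight r D := by
  have hD : ∀ y ∈ D, ∏ c ∈ insert x D with c ⋖ y, r c y =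
      (if x ⋖ y then r x y else 1) * ∏ c ∈ D with c ⋖ y, r c y := by
    intro y _
    rw [filter_insert]
    split_ifs
    · exact prod_insert fun h => hx (mem_filter.1 h).1
    · rw [one_mul]
  rw [coverWeight, prod_insert hx, filter_insert, if_neg fun h => h.lt.false,
    prod_congr rfl hD, prod_mul_distrib, ← prod_filter, coverWeight, mul_assoc]

omit [DecidableEq α] in
theorem filter_covBy_eq_singleton {D : Finset α} (hD : IsChain (· ≤ ·) (D : Set α)) {w x : α}
    (hw : w ∈ D) (hwx : w ⋖ x) : D.filter (· ⋖ x) = {w} := by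
  refine eq_singleton_iff_unique_mem.2 ⟨mem_filter.2 ⟨hw, hwx⟩, fun c hc => ?_⟩
  obtain ⟨hc, hcx⟩ := mem_filter.1 hc
  rcases hD.total hc hw with hcw | hwc
  · exact ((hcx.eq_or_eq hcw hwx.le).resolve_right hwx.ne).symm
  · exact (hwx.eq_or_eq hwc hcx.le).resolve_right hcx.ne

omit [DecidableEq α] in
theorem filter_covBy_left_eq_singleton {D : Finset α} (hD : IsChain (· ≤ ·) (D : Set α))
    {x y : α} (hy : y ∈ D) (hxy : x ⋖ y) : D.filter (x ⋖ ·) = {y} := by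
  refine eq_singleton_iff_unique_mem.2 ⟨mem_filter.2 ⟨hy, hxy⟩, fun c hc => ?_⟩
  obtain ⟨hc, hxc⟩ := mem_filter.1 hc
  rcases hD.total hc hy with hcy | hyc
  · exact (hxy.eq_or_eq hxc.le hcy).resolve_left hxc.ne'
  · exact ((hxc.eq_or_eq hxy.le hyc).resolve_left hxy.ne').symm

theorem coverWeight_insert_of_covBy_of_covBy {x w y : α} {D : Finset α}
    (hD : IsChain (· ≤ ·) (D : Set α)) (hx : x ∉ D) (hw : w ∈ D) (hy : y ∈ D) (hwx : w ⋖ x)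
    (hxy : x ⋖ y) : coverWeight r (insert x D) = r w x * r x y * coverWeight r D := by
  rw [coverWeight_insert hx, filter_covBy_eq_singleton hD hw hwx,
    filter_covBy_left_eq_singleton hD hy hxy, prod_singleton, prod_singleton]

theorem coverWeight_insert_of_covBy_of_forall_le {u v : α} {D : Finset α}
    (hD : IsChain (· ≤ ·) (D : Set α)) (hu : u ∈ D) (huv : u ⋖ v) (hle : ∀ d ∈ D, d ≤ u) :
    coverWeight r (insert v D) = r u v * coverWeight r D := by
  have hvD : v ∉ D := fun hv => huv.lt.not_ge (hle v hv)
  have hempty : D.filter (v ⋖ ·) = ∅ :=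
    filter_eq_empty_iff.2 fun d hd hvd => hvd.lt.not_ge ((hle d hd).trans huv.le)
  rw [coverWeight_insert hvD, filter_covBy_eq_singleton hD hu huv, hempty, prod_singleton,
    prod_empty, mul_one]

omit [DecidableEq α] in
theorem isUnit_coverWeight (hr : ∀ x y : α, x ⋖ y → IsUnit (r x y)) (C : Finset α) :
    IsUnit (coverWeight r C) :=
  IsUnit.prod_iff.2 fun y _ => IsUnit.prod_iff.2 fun x hx => hr x y (mem_filter.1 hx).2

end CoverWeight

section Exchange

variable {M : Type*} [CommMonoid M] [PartialOrder α] [DecidableEq α] {a b : α}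
  {C C' : Finset α}

theorem IsMaxChainFinsetIn.eq_insert_erase_of_inter_eq_erase
    (hC : IsMaxChainFinsetIn (· ≤ ·) (Set.Icc a b) C)
    (hC' : IsMaxChainFinsetIn (· ≤ ·) (Set.Icc a b) C') {x w y x' : α}
    (hCC' : C' ∩ C = C.erase x) (hw : w ∈ C.erase x) (hy : y ∈ C.erase x) (hwx : w < x)
    (hxy : x < y) (hx' : x' ∈ C') (hwx' : w ⋖ x') (hx'y : x' ⋖ y) :
    C' = insert x' (C.erase x) := by
  have hD : C.erase x ⊆ C' := hCC' ▸ inter_subset_left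
  ext c
  refine ⟨fun hc => ?_, fun hc => (mem_insert.1 hc).elim (· ▸ hx') (hD ·)⟩
  by_cases hcC : c ∈ C
  · exact mem_insert_of_mem (hCC' ▸ mem_inter.2 ⟨hc, hcC⟩)
  have hcD : ∀ d ∈ C.erase x, c ≤ d ∨ d ≤ c := fun d hd => hC'.isChain.total hc (hD hd)
  have hcx : ¬(c ≤ x ∨ x ≤ c) := fun hcx => hcC <| hC.mem_of_forall (hC'.1.1 hc) fun d hd => by
    rcases eq_or_ne d x with rfl | hdx
    · exact hcx.symm
    · exact (hcD d (mem_erase.2 ⟨hdx, hd⟩)).symm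
  have hwc : w < c := by
    refine ((hcD w hw).resolve_left fun h => hcx (Or.inl (h.trans hwx.le))).lt_of_ne ?_
    rintro rfl
    exact hcC (mem_of_mem_erase hw)
  have hcy : c < y := by
    refine ((hcD y hy).resolve_right fun h => hcx (Or.inr (hxy.le.trans h))).lt_of_ne ?_
    rintro rfl
    exact hcC (mem_of_mem_erase hy)
  rcases hC'.isChain.total hc hx' with hcx' | hx'c
  · rcases hcx'.lt_or_eq with hcx' | rfl
    · exact absurd hcx' (hwx'.2 hwc)
    · exact mem_insert_self c _
  · rcases hx'c.lt_or_eq with hx'c | rfl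
    · exact absurd hcy (hx'y.2 hx'c)
    · exact mem_insert_self _ _

theorem IsMaxChainFinsetIn.coverWeight_eq_of_inter_eq_erase [Finite α] {g : α → ℤ}
    (hg : ∀ u v : α, u ⋖ v → g v = g u + 1) {r : α → α → M}
    (hr : ∀ u x x' v : α, x ≠ x' → u ⋖ x → x ⋖ v → u ⋖ x' → x' ⋖ v →
      r u x * r x v = r u x' * r x' v)
    (hab : a ≤ b) (hC : IsMaxChainFinsetIn (· ≤ ·) (Set.Icc a b) C)
    (hC' : IsMaxChainFinsetIn (· ≤ ·) (Set.Icc a b) C') {x : α} (hx : x ∈ C)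
    (hCC' : C' ∩ C = C.erase x) : coverWeight r C' = coverWeight r C := by
  have hD : C.erase x ⊆ C' := hCC' ▸ inter_subset_left
  have hxC' : x ∉ C' := fun h => by simpa using hCC'.le (mem_inter.2 ⟨h, hx⟩)
  obtain ⟨w, hwC, hwx⟩ := hC.exists_covBy_mem hab hx fun h => hxC' (h ▸ hC'.left_mem hab)
  obtain ⟨y, hyC, hxy⟩ := hC.exists_mem_covBy hab hx fun h => hxC' (h ▸ hC'.right_mem hab)
  have hwD : w ∈ C.erase x := mem_erase.2 ⟨hwx.lt.ne, hwC⟩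
  have hyD : y ∈ C.erase x := mem_erase.2 ⟨hxy.lt.ne', hyC⟩
  obtain ⟨x', hx'C', hx'y⟩ := hC'.exists_covBy_mem hab (hD hyD)
    ((hC.1.1 hwC).1.trans_lt (hwx.lt.trans hxy.lt)).ne'
  have hwx' : w ⋖ x' := (strictMono_of_covBy_eq_add_one hg).covBy_of_le_or_le
    (hC'.isChain.total (hD hwD) hx'C') (by linarith [hg _ _ hwx, hg _ _ hxy, hg _ _ hx'y])
  have hx'D : x' ∉ C.erase x := by
    classical
    intro h
    have hx'x : x' ∈ C.filter (w ⋖ ·) := mem_filter.2 ⟨mem_of_mem_erase h, hwx'⟩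
    rw [filter_covBy_left_eq_singleton hC.isChain hx hwx, mem_singleton] at hx'x
    exact hxC' (hx'x ▸ hx'C')
  have hDchain : IsChain (· ≤ ·) (C.erase x : Set α) :=
    hC.isChain.mono (coe_subset.2 (erase_subset x C))
  rw [hC.eq_insert_erase_of_inter_eq_erase hC' hCC' hwD hyD hwx.lt hxy.lt hx'C' hwx' hx'y,
    coverWeight_insert_of_covBy_of_covBy hDchain hx'D hwD hyD hwx' hx'y]
  conv_rhs => rw [← insert_erase hx,
    coverWeight_insert_of_covBy_of_covBy hDchain (notMem_erase x C) hwD hyD hwx hxy]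
  rw [hr w x x' y (fun h => hxC' (h ▸ hx'C')) hwx hxy hwx' hx'y]

end Exchange

theorem IsShellingOrder.apply_eq_of_adjacent [DecidableEq α] [Finite α] {β : Type*}
    {le : α → α → Prop} {S : Set α} {ρ : Finset α → Finset α → Prop}
    (hρ : IsShellingOrder le S ρ) {f : Finset α → β}
    (hf : ∀ C C' x, IsMaxChainFinsetIn le S C → IsMaxChainFinsetIn le S C' → x ∈ C →
      C' ∩ C = C.erase x → f C' = f C)
    {C₁ C₂ : Finset α} (h₁ : IsMaxChainFinsetIn le S C₁) (h₂ : IsMaxChainFinsetIn le S C₂) :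
    f C₁ = f C₂ := by
  obtain ⟨hirrefl, htrans, htotal, hshell⟩ := hρ
  let ρ' C D := IsMaxChainFinsetIn le S C ∧ IsMaxChainFinsetIn le S D ∧ ρ C D
  have : IsTrans _ ρ' :=
    ⟨fun C D E h h' => ⟨h.1, h'.2.1, htrans C D E h.1 h.2.1 h'.2.1 h.2.2 h'.2.2⟩⟩
  have : Std.Irrefl ρ' := ⟨fun C h => hirrefl C h.1 h.2.2⟩
  have below : ∀ D, IsMaxChainFinsetIn le S D → ∀ C, IsMaxChainFinsetIn le S C → ρ C D →
      f C = f D := by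
    intro D
    induction D using (Finite.wellFounded_of_trans_of_irrefl ρ').induction with
    | _ D ih =>
      intro hD C hC hCD
      obtain ⟨E, hE, hED, x, hx, -, hEx⟩ := hshell C D hC hD hCD
      rw [← hf D E x hD hE hx hEx]
      rcases eq_or_ne C E with rfl | hCE
      · rfl
      rcases htotal C E hC hE hCE with hCE | hEC
      · exact ih E ⟨hE, hD, hED⟩ hE C hC hCE
      · exact (ih C ⟨hC, hD, hCD⟩ hC E hE hEC).symm
  rcases eq_or_ne C₁ C₂ with rfl | hne
  · rfl
  rcases htotal C₁ C₂ h₁ h₂ hne with h | h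
  · exact below C₂ h₂ C₁ h₁ h
  · exact (below C₁ h₁ C₂ h₂ h).symm

theorem sign_assignments_equivalent_general
    [PartialOrder α] [Fintype α] [DecidableEq α]
    (z : α) (huniq : ∀ w : α, IsMin w → w = z)
    (g : α → ℤ)
    (hg : ∀ a b : α, CovRel (· ≤ · : α → α → Prop) a b → g b = g a + 1)
    (hshell : ∀ a b : α, a ≤ b →
      IsShellableIn (· ≤ · : α → α → Prop) (Set.Icc a b))
    (s s' : α → α → ℤ)
    (hs : IsSignAssignment (· ≤ · : α → α → Prop) s)
    (hs' : IsSignAssignment (· ≤ · : α → α → Prop) s') :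
    ∃ ε : α → ℤ, (∀ p : α, ε p = 1 ∨ ε p = -1) ∧
      ∀ u v : α, CovRel (· ≤ · : α → α → Prop) u v →
        s' u v = ε u * ε v * s u v := by
  have hg' : ∀ u v : α, u ⋖ v → g v = g u + 1 := fun u v h => hg u v (covRel_iff_covBy.2 h)
  set r : α → α → ℤ := fun u v => s' u v * s u v
  have hr : ∀ u v : α, u ⋖ v → IsUnit (r u v) := fun u v h =>
    (hs'.isUnit h).mul (hs.isUnit h)
  have hz := le_of_forall_isMin_eq huniq
  choose C hC using fun p => exists_isMaxChainFinsetIn (· ≤ ·) (Set.Icc z p)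
  refine ⟨fun p => coverWeight r (C p), fun p => Int.isUnit_iff.1 (isUnit_coverWeight hr _),
    fun u v huv => ?_⟩
  rw [covRel_iff_covBy] at huv
  obtain ⟨ρ, hρ⟩ := hshell z v (hz v)
  have hstep : coverWeight r (C v) = r u v * coverWeight r (C u) := by
    rw [hρ.apply_eq_of_adjacent
      (fun _ _ _ hD hD' hx hDD' => hD.coverWeight_eq_of_inter_eq_erase hg'
        (fun _ _ _ _ => hs.diamond_ratio hg' hs') (hz v) hD' hx hDD')
      (hC v) ((hC u).insert_of_covBy (hz u) huv)]
    exact coverWeight_insert_of_covBy_of_forall_le (hC u).isChain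
      ((hC u).right_mem (hz u)) huv fun d hd => ((hC u).1.1 hd).2
  have hεu := Int.isUnit_mul_self (isUnit_coverWeight hr (C u))
  have hsuv := Int.isUnit_mul_self (hs.isUnit huv)
  simp only [hstep, r]
  linear_combination (-(s' u v) * s u v ^ 2) * hεu - s' u v * hsuv

/-- Let `P` be a finite poset with a unique minimal element,
a grading assignment, and shellable closed intervals.  Then any two sign
assignments on `P` are equivalent: `s'` is obtained from `s` by a finite
sequence of moves, each reversing the signs of all covering relations involving
a chosen element; equivalently, there is `ε : P → {±1}` with
`s' (u ⋖ v) = ε u · ε v · s (u ⋖ v)` on all covering relations. -/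
theorem sign_assignments_equivalent
    [PartialOrder α] [Fintype α] [DecidableEq α]
    (z : α) (hmin : IsMin z) (huniq : ∀ w : α, IsMin w → w = z)
    (g : α → ℤ)
    (hg : ∀ a b : α, CovRel (· ≤ · : α → α → Prop) a b → g b = g a + 1)
    (hshell : ∀ a b : α, a ≤ b →
      IsShellableIn (· ≤ · : α → α → Prop) (Set.Icc a b))
    (s s' : α → α → ℤ)
    (hs : IsSignAssignment (· ≤ · : α → α → Prop) s)
    (hs' : IsSignAssignment (· ≤ · : α → α → Prop) s') :
    ∃ ε : α → ℤ, (∀ p : α, ε p = 1 ∨ ε p = -1) ∧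
      ∀ u v : α, CovRel (· ≤ · : α → α → Prop) u v →
        s' u v = ε u * ε v * s u v :=
  sign_assignments_equivalent_general z huniq g hg hshell s s' hs hs'
end
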